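/- (Lemma 2) Fix α ∈ (0, 1) with (1 − α)/(1 + α) < √α, cell parameterization data W₀, H₀ > 0, b_x, b_y ∈ ℝ, i, j, m, n ∈ ℤ, and fix the fractional offsets j₁, m₁, n₁, i₂, j₂, m₂, n₂ ∈ [−1/2, 1/2]. Then the function i₁ ↦ IoU(b₁, b₂) of the two parameterized boxes, defined on [−1/2, 1/2], attains its minimum at i₁ = −1/2 or i₁ = 1/2. -/

import Mathlib

/-- Intersection area of two axis-aligned boxes given as (w, h, x, y):
the rectangle [x - w/2, x + w/2] × [y - h/2, y + h/2]. -/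
noncomputable def interArea (w₁ h₁ x₁ y₁ w₂ h₂ x₂ y₂ : ℝ) : ℝ :=
  max 0 (min (x₁ + w₁ / 2) (x₂ + w₂ / 2) - max (x₁ - w₁ / 2) (x₂ - w₂ / 2)) *
    max 0 (min (y₁ + h₁ / 2) (y₂ + h₂ / 2) - max (y₁ - h₁ / 2) (y₂ - h₂ / 2))

/-- Intersection over union of two axis-aligned boxes. -/
noncomputable def iou (w₁ h₁ x₁ y₁ w₂ h₂ x₂ y₂ : ℝ) : ℝ :=
  interArea w₁ h₁ x₁ y₁ w₂ h₂ x₂ y₂ /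
    (w₁ * h₁ + w₂ * h₂ - interArea w₁ h₁ x₁ y₁ w₂ h₂ x₂ y₂)
/-- Width (resp. height) of the k-th box in the cell parameterization:
w_k = W₀ / α^(i + i_k), with a real exponent (Real.rpow). -/
noncomputable def cellW (α W₀ : ℝ) (i : ℤ) (ik : ℝ) : ℝ := W₀ / α ^ ((i : ℝ) + ik)

/-- Offset partition spacing δ_i = (W₀ / α^i) · (1 − α)/(1 + α). -/
noncomputable def cellDelta (α W₀ : ℝ) (i : ℤ) : ℝ := W₀ / α ^ i * ((1 - α) / (1 + α))

/-- Offset of the k-th box in the cell parameterization: x_k = (b_x + m + m_k)·δ_i. -/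
noncomputable def cellX (α W₀ bX : ℝ) (i m : ℤ) (mk : ℝ) : ℝ :=
  (bX + (m : ℝ) + mk) * cellDelta α W₀ i

/-- IoU of the two boxes b₁, b₂ given by the cell parameterization with data
(α, W₀, H₀, b_x, b_y, i, j, m, n) and fractional offsets (i₁, j₁, m₁, n₁), (i₂, j₂, m₂, n₂). -/
noncomputable def cellIoU (α W₀ H₀ bX bY : ℝ) (i j m n : ℤ)
    (i₁ j₁ m₁ n₁ i₂ j₂ m₂ n₂ : ℝ) : ℝ :=
  iou (cellW α W₀ i i₁) (cellW α H₀ j j₁) (cellX α W₀ bX i m m₁) (cellX α H₀ bY j n n₁)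
      (cellW α W₀ i i₂) (cellW α H₀ j j₂) (cellX α W₀ bX i m m₂) (cellX α H₀ bY j n n₂)

/-!
The IoU is quasiconcave in the width `w` of the first box. For a level `c > 0`, clearing the
denominator turns `c ≤ IoU` into `c · (w h₁ + w₂ h₂) ≤ (1 + c) · L_y · ℓ(w)`, where `L_y ≥ 0` is
the overlap of the `y`-intervals and `ℓ(w)`, the signed overlap of the `x`-intervals, is a
minimum of affine functions of `w` minus a maximum of affine ones, hence concave; so every
superlevel set is convex. A quasiconcave function on a segment is minimised at an endpoint, and
the width `W₀ / α ^ (i + i₁)` is monotone in `i₁`.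
-/

open Set

/-- Signed overlap length of two centred intervals, negative when they are disjoint;
`interArea` clamps it at `0`. -/
noncomputable def overlap (x₁ w₁ x₂ w₂ : ℝ) : ℝ :=
  min (x₁ + w₁ / 2) (x₂ + w₂ / 2) - max (x₁ - w₁ / 2) (x₂ - w₂ / 2)

section Boxes

variable {w₁ h₁ x₁ y₁ w₂ h₂ x₂ y₂ : ℝ}

theorem interArea_eq_overlap :
    interArea w₁ h₁ x₁ y₁ w₂ h₂ x₂ y₂ =
      max 0 (overlap x₁ w₁ x₂ w₂) * max 0 (overlap y₁ h₁ y₂ h₂) :=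
  rfl

theorem overlap_le_right : overlap x₁ w₁ x₂ w₂ ≤ w₂ := by
  unfold overlap
  linarith [min_le_right (x₁ + w₁ / 2) (x₂ + w₂ / 2), le_max_right (x₁ - w₁ / 2) (x₂ - w₂ / 2)]

theorem interArea_nonneg : 0 ≤ interArea w₁ h₁ x₁ y₁ w₂ h₂ x₂ y₂ :=
  mul_nonneg (le_max_left _ _) (le_max_left _ _)

theorem interArea_le_area_right (hw₂ : 0 ≤ w₂) (hh₂ : 0 ≤ h₂) :
    interArea w₁ h₁ x₁ y₁ w₂ h₂ x₂ y₂ ≤ w₂ * h₂ :=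
  mul_le_mul (max_le hw₂ overlap_le_right) (max_le hh₂ overlap_le_right) (le_max_left _ _) hw₂

theorem union_area_pos (hw₁ : 0 < w₁) (hh₁ : 0 < h₁) (hw₂ : 0 ≤ w₂) (hh₂ : 0 ≤ h₂) :
    0 < w₁ * h₁ + w₂ * h₂ - interArea w₁ h₁ x₁ y₁ w₂ h₂ x₂ y₂ := by
  nlinarith [interArea_le_area_right (w₁ := w₁) (h₁ := h₁) (x₁ := x₁) (y₁ := y₁) (x₂ := x₂)
    (y₂ := y₂) hw₂ hh₂]

theorem iou_nonneg (hw₁ : 0 < w₁) (hh₁ : 0 < h₁) (hw₂ : 0 ≤ w₂) (hh₂ : 0 ≤ h₂) :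
    0 ≤ iou w₁ h₁ x₁ y₁ w₂ h₂ x₂ y₂ :=
  div_nonneg interArea_nonneg (union_area_pos hw₁ hh₁ hw₂ hh₂).le

theorem le_iou_iff {c : ℝ} (hc : 0 < c) (hw₁ : 0 < w₁) (hh₁ : 0 < h₁) (hw₂ : 0 ≤ w₂)
    (hh₂ : 0 ≤ h₂) :
    c ≤ iou w₁ h₁ x₁ y₁ w₂ h₂ x₂ y₂ ↔
      c * (w₁ * h₁ + w₂ * h₂) ≤
        (1 + c) * max 0 (overlap y₁ h₁ y₂ h₂) * overlap x₁ w₁ x₂ w₂ := by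
  rw [iou, le_div_iff₀ (union_area_pos hw₁ hh₁ hw₂ hh₂), interArea_eq_overlap]
  have hA : 0 < c * (w₁ * h₁ + w₂ * h₂) := by positivity
  have hK : 0 ≤ (1 + c) * max 0 (overlap y₁ h₁ y₂ h₂) := by positivity
  rcases le_total (overlap x₁ w₁ x₂ w₂) 0 with hx | hx
  -- both sides fail: the left side of the inequality is positive, the right one is not
  · rw [max_eq_left hx]
    constructor <;> intro h <;> nlinarith [mul_nonpos_of_nonneg_of_nonpos hK hx]
  · rw [max_eq_right hx]
    constructor <;> intro h <;> linarith

end Boxes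

theorem concaveOn_overlap_left (x₁ x₂ w₂ : ℝ) :
    ConcaveOn ℝ univ (fun w => overlap x₁ w x₂ w₂) := by
  have hmin : ConcaveOn ℝ univ (fun w : ℝ => min (x₁ + w / 2) (x₂ + w₂ / 2)) := by
    refine ConcaveOn.inf ?_ (concaveOn_const _ convex_univ)
    exact ((LinearMap.mul ℝ ℝ 2⁻¹).concaveOn convex_univ).add_const x₁ |>.congr
      fun w _ => by simp only [Pi.add_apply, LinearMap.mul_apply']; ring
  have hmax : ConvexOn ℝ univ (fun w : ℝ => max (x₁ - w / 2) (x₂ - w₂ / 2)) := by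
    refine ConvexOn.sup ?_ (convexOn_const _ convex_univ)
    exact ((LinearMap.mul ℝ ℝ (-2⁻¹)).convexOn convex_univ).add_const x₁ |>.congr
      fun w _ => by simp only [Pi.add_apply, LinearMap.mul_apply']; ring
  exact hmin.sub hmax

theorem quasiconcaveOn_iou_width {h₁ x₁ y₁ w₂ h₂ x₂ y₂ : ℝ} (hh₁ : 0 < h₁) (hw₂ : 0 ≤ w₂)
    (hh₂ : 0 ≤ h₂) :
    QuasiconcaveOn ℝ (Ioi 0) (fun w => iou w h₁ x₁ y₁ w₂ h₂ x₂ y₂) := by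
  intro c
  beta_reduce
  rcases le_or_gt c 0 with hc | hc
  · rw [(sep_eq_self_iff_mem_true (s := Ioi 0)).2 fun w hw =>
      hc.trans (iou_nonneg hw hh₁ hw₂ hh₂)]
    exact convex_Ioi 0
  · set K := (1 + c) * max 0 (overlap y₁ h₁ y₂ h₂)
    have hg : ConcaveOn ℝ (Ioi 0)
        (fun w => K * overlap x₁ w x₂ w₂ - c * (w * h₁ + w₂ * h₂)) := by
      refine (((concaveOn_overlap_left x₁ x₂ w₂).subset (subset_univ _) (convex_Ioi 0)).smul
        (by positivity : 0 ≤ K)).sub ?_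
      exact ((LinearMap.mul ℝ ℝ (c * h₁)).convexOn (convex_Ioi 0)).add_const (c * (w₂ * h₂))
        |>.congr fun w _ => by simp only [Pi.add_apply, LinearMap.mul_apply']; ring
    convert hg.convex_ge 0 using 2
    ext w
    refine and_congr_right fun hw => ?_
    rw [le_iou_iff hc hw hh₁ hw₂ hh₂, sub_nonneg]

theorem QuasiconcaveOn.min_le_of_mem_Icc {𝕜 β : Type*} [Field 𝕜] [LinearOrder 𝕜]
    [IsStrictOrderedRing 𝕜] [LinearOrder β] {s : Set 𝕜} {f : 𝕜 → β}
    (hf : QuasiconcaveOn 𝕜 s f) {a b t : 𝕜} (ha : a ∈ s) (hb : b ∈ s) (ht : t ∈ Icc a b) :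
    min (f a) (f b) ≤ f t :=
  ((hf _).ordConnected.out ⟨ha, min_le_left _ _⟩ ⟨hb, min_le_right _ _⟩ ht).2

theorem exists_mem_pair_forall_le_of_min_le {γ β : Type*} [LinearOrder β] {f : γ → β}
    {a b : γ} {s : Set γ} (h : ∀ t ∈ s, min (f a) (f b) ≤ f t) :
    ∃ x ∈ ({a, b} : Set γ), ∀ t ∈ s, f x ≤ f t := by
  rcases le_total (f a) (f b) with hab | hab
  · exact ⟨a, .inl rfl, fun t ht => min_eq_left hab ▸ h t ht⟩
  · exact ⟨b, .inr rfl, fun t ht => min_eq_right hab ▸ h t ht⟩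

section Cell

variable {α W₀ : ℝ}

theorem cellW_pos (hα : 0 < α) (hW₀ : 0 < W₀) (i : ℤ) (t : ℝ) : 0 < cellW α W₀ i t :=
  div_pos hW₀ (Real.rpow_pos_of_pos hα _)

theorem cellW_mono (hα₀ : 0 < α) (hα₁ : α ≤ 1) (hW₀ : 0 ≤ W₀) (i : ℤ) :
    Monotone (cellW α W₀ i) :=
  fun _ _ htu => div_le_div_of_nonneg_left hW₀ (Real.rpow_pos_of_pos hα₀ _)
    (Real.rpow_le_rpow_of_exponent_ge hα₀ hα₁ (by linarith))

end Cell

theorem stmt_13_general (α : ℝ) (hα : α ∈ Set.Ioo (0 : ℝ) 1)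
    (W₀ H₀ bX bY : ℝ) (hW₀ : 0 < W₀) (hH₀ : 0 < H₀) (i j m n : ℤ)
    (j₁ m₁ n₁ i₂ j₂ m₂ n₂ : ℝ) :
    ∃ i₁ ∈ ({-(1:ℝ)/2, 1/2} : Set ℝ),
      ∀ t ∈ Set.Icc (-(1:ℝ)/2) (1/2),
        cellIoU α W₀ H₀ bX bY i j m n i₁ j₁ m₁ n₁ i₂ j₂ m₂ n₂ ≤
          cellIoU α W₀ H₀ bX bY i j m n t j₁ m₁ n₁ i₂ j₂ m₂ n₂ := by
  have hquasi := quasiconcaveOn_iou_width (cellW_pos hα.1 hH₀ j j₁)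
    (cellW_pos hα.1 hW₀ i i₂).le (cellW_pos hα.1 hH₀ j j₂).le
    (x₁ := cellX α W₀ bX i m m₁) (y₁ := cellX α H₀ bY j n n₁)
    (x₂ := cellX α W₀ bX i m m₂) (y₂ := cellX α H₀ bY j n n₂)
  have hwidth := cellW_mono hα.1 hα.2.le hW₀.le i
  refine exists_mem_pair_forall_le_of_min_le fun t ht => ?_
  unfold cellIoU
  exact hquasi.min_le_of_mem_Icc (cellW_pos hα.1 hW₀ i _) (cellW_pos hα.1 hW₀ i _)
    ⟨hwidth ht.1, hwidth ht.2⟩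

theorem stmt_13 (α : ℝ) (hα : α ∈ Set.Ioo (0 : ℝ) 1)
    (hcond : (1 - α) / (1 + α) < Real.sqrt α)
    (W₀ H₀ bX bY : ℝ) (hW₀ : 0 < W₀) (hH₀ : 0 < H₀) (i j m n : ℤ)
    (j₁ m₁ n₁ i₂ j₂ m₂ n₂ : ℝ)
    (hj₁ : j₁ ∈ Set.Icc (-(1:ℝ)/2) (1/2)) (hm₁ : m₁ ∈ Set.Icc (-(1:ℝ)/2) (1/2))
    (hn₁ : n₁ ∈ Set.Icc (-(1:ℝ)/2) (1/2))
    (hi₂ : i₂ ∈ Set.Icc (-(1:ℝ)/2) (1/2)) (hj₂ : j₂ ∈ Set.Icc (-(1:ℝ)/2) (1/2))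
    (hm₂ : m₂ ∈ Set.Icc (-(1:ℝ)/2) (1/2)) (hn₂ : n₂ ∈ Set.Icc (-(1:ℝ)/2) (1/2)) :
    ∃ i₁ ∈ ({-(1:ℝ)/2, 1/2} : Set ℝ),
      ∀ t ∈ Set.Icc (-(1:ℝ)/2) (1/2),
        cellIoU α W₀ H₀ bX bY i j m n i₁ j₁ m₁ n₁ i₂ j₂ m₂ n₂ ≤
          cellIoU α W₀ H₀ bX bY i j m n t j₁ m₁ n₁ i₂ j₂ m₂ n₂ :=
  stmt_13_general α hα W₀ H₀ bX bY hW₀ hH₀ i j m n j₁ m₁ n₁ i₂ j₂ m₂ n₂
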